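/- arXiv:2210.11137 — 3 statements merged into one kernel-verified Lean document; each statement's English description precedes it below -/
import Mathlib

section
/- Weak duality for optimal-transport trust-region policy optimization in the finite case: Let S = {s_1,…,s_M} and A = {a_1,…,a_N} be finite sets, ρ a probability vector on S, π a stochastic matrix (π_{i,j} ≥ 0, Σ_j π_{i,j} = 1), Adv : S × A → ℝ a function, c : A × A → ℝ≥0 with c(a,a)=0, ε > 0, and let C(μ,ν) denote the optimal transport cost between probability vectors μ, ν on A with cost c. Then sup over stochastic matrices π̃ satisfying Σ_i ρ_i C(π(·|s_i), π̃(·|s_i)) ≤ ε of Σ_i ρ_i Σ_j π̃_{i,j} Adv(s_i, a_j) is at most inf_{λ ≥ 0} [ λε + Σ_i ρ_i Σ_j π_{i,j} max_{k} (Adv(s_i, a_k) - λ c(a_j, a_k)) ]. -/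
/-- Discrete optimal transport cost between two probability vectors on `Fin N`
with ground cost `c`. -/
noncomputable def dOT {N : ℕ} (c : Fin N → Fin N → ℝ) (μ ν : Fin N → ℝ) : ℝ :=
  sInf {r : ℝ | ∃ γ : Fin N → Fin N → ℝ,
    (∀ j k, 0 ≤ γ j k) ∧ (∀ j, ∑ k, γ j k = μ j) ∧ (∀ k, ∑ j, γ j k = ν k) ∧
    r = ∑ j, ∑ k, γ j k * c j k}

theorem stmt4 {M N : ℕ} [NeZero N]
    (ρ : Fin M → ℝ) (hρ : ∀ i, 0 ≤ ρ i) (hρ1 : ∑ i, ρ i = 1)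
    (π : Fin M → Fin N → ℝ) (hπ : ∀ i j, 0 ≤ π i j) (hπ1 : ∀ i, ∑ j, π i j = 1)
    (Adv : Fin M → Fin N → ℝ)
    (c : Fin N → Fin N → ℝ) (hc : ∀ j k, 0 ≤ c j k) (hc0 : ∀ j, c j j = 0)
    (ε : ℝ) (hε : 0 < ε)
    (π' : Fin M → Fin N → ℝ) (hπ' : ∀ i j, 0 ≤ π' i j) (hπ'1 : ∀ i, ∑ j, π' i j = 1)
    (hfeas : ∑ i, ρ i * dOT c (π i) (π' i) ≤ ε)
    (l : ℝ) (hl : 0 ≤ l) :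
    ∑ i, ρ i * ∑ j, π' i j * Adv i j ≤
      l * ε + ∑ i, ρ i * ∑ j, π i j * (⨆ k : Fin N, (Adv i k - l * c j k)) := by
  refine le_of_forall_pos_le_add ?_
  intro δ hδ
  set δ' := δ / (l + 1) with hδ'def
  have hl1 : (0:ℝ) < l + 1 := by linarith
  have hδ'pos : 0 < δ' := div_pos hδ hl1
  -- choose near-optimal couplings
  have hchoose : ∀ i : Fin M, ∃ γ : Fin N → Fin N → ℝ,
      (∀ j k, 0 ≤ γ j k) ∧ (∀ j, ∑ k, γ j k = π i j) ∧ (∀ k, ∑ j, γ j k = π' i k) ∧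
      ∑ j, ∑ k, γ j k * c j k ≤ dOT c (π i) (π' i) + δ' := by
    intro i
    have hne : {r : ℝ | ∃ γ : Fin N → Fin N → ℝ,
        (∀ j k, 0 ≤ γ j k) ∧ (∀ j, ∑ k, γ j k = π i j) ∧ (∀ k, ∑ j, γ j k = π' i k) ∧
        r = ∑ j, ∑ k, γ j k * c j k}.Nonempty := by
      refine ⟨_, fun j k => π i j * π' i k, ?_, ?_, ?_, rfl⟩
      · intro j k; exact mul_nonneg (hπ i j) (hπ' i k)
      · intro j; rw [← Finset.mul_sum, hπ'1 i, mul_one]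
      · intro k; rw [← Finset.sum_mul, hπ1 i, one_mul]
    obtain ⟨r, hrmem, hr⟩ := Real.lt_sInf_add_pos hne hδ'pos
    obtain ⟨γ, h1, h2, h3, h4⟩ := hrmem
    exact ⟨γ, h1, h2, h3, by rw [← h4]; exact hr.le⟩
  choose γ hγ0 hγrow hγcol hγcost using hchoose
  have hsup : ∀ i j k, Adv i k - l * c j k ≤ ⨆ m : Fin N, (Adv i m - l * c j m) := by
    intro i j k
    exact le_ciSup (f := fun m : Fin N => Adv i m - l * c j m)
      (Set.Finite.bddAbove (Set.finite_range _)) k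
  -- key per-state inequality
  have key : ∀ i, ∑ j, π' i j * Adv i j ≤
      (∑ j, π i j * (⨆ k : Fin N, (Adv i k - l * c j k))) + l * ∑ j, ∑ k, γ i j k * c j k := by
    intro i
    have e1 : ∑ j, π' i j * Adv i j = ∑ m, ∑ j, γ i m j * Adv i j := by
      rw [Finset.sum_comm]
      refine Finset.sum_congr rfl fun j _ => ?_
      rw [← hγcol i j, Finset.sum_mul]
    rw [e1]
    have e2 : ∀ m j, γ i m j * Adv i j ≤
        γ i m j * ((⨆ k : Fin N, (Adv i k - l * c m k)) + l * c m j) := by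
      intro m j
      refine mul_le_mul_of_nonneg_left ?_ (hγ0 i m j)
      have := hsup i m j
      linarith
    calc ∑ m, ∑ j, γ i m j * Adv i j
        ≤ ∑ m, ∑ j, γ i m j * ((⨆ k : Fin N, (Adv i k - l * c m k)) + l * c m j) := by
          exact Finset.sum_le_sum fun m _ => Finset.sum_le_sum fun j _ => e2 m j
      _ = (∑ m, π i m * (⨆ k : Fin N, (Adv i k - l * c m k))) + l * ∑ m, ∑ j, γ i m j * c m j := by
          simp only [mul_add, Finset.sum_add_distrib, Finset.mul_sum]
          congr 1
          · refine Finset.sum_congr rfl fun m _ => ?_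
            rw [← Finset.sum_mul, hγrow i m]
          · refine Finset.sum_congr rfl fun m _ => Finset.sum_congr rfl fun j _ => ?_
            ring
  -- combine
  have step1 : ∑ i, ρ i * ∑ j, π' i j * Adv i j ≤
      ∑ i, ρ i * ((∑ j, π i j * (⨆ k : Fin N, (Adv i k - l * c j k)))
        + l * ∑ j, ∑ k, γ i j k * c j k) :=
    Finset.sum_le_sum fun i _ => mul_le_mul_of_nonneg_left (key i) (hρ i)
  have step2 : ∑ i, ρ i * ((∑ j, π i j * (⨆ k : Fin N, (Adv i k - l * c j k)))
        + l * ∑ j, ∑ k, γ i j k * c j k)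
      = (∑ i, ρ i * ∑ j, π i j * (⨆ k : Fin N, (Adv i k - l * c j k)))
        + l * ∑ i, ρ i * ∑ j, ∑ k, γ i j k * c j k := by
    simp only [mul_add, Finset.sum_add_distrib, Finset.mul_sum]
    congr 1
    refine Finset.sum_congr rfl fun i _ => Finset.sum_congr rfl fun j _ =>
      Finset.sum_congr rfl fun k _ => ?_
    ring
  have step3 : ∑ i, ρ i * ∑ j, ∑ k, γ i j k * c j k ≤ ε + δ' := by
    calc ∑ i, ρ i * ∑ j, ∑ k, γ i j k * c j k
        ≤ ∑ i, ρ i * (dOT c (π i) (π' i) + δ') :=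
          Finset.sum_le_sum fun i _ => mul_le_mul_of_nonneg_left (hγcost i) (hρ i)
      _ = (∑ i, ρ i * dOT c (π i) (π' i)) + δ' := by
          simp only [mul_add, Finset.sum_add_distrib]
          rw [← Finset.sum_mul, hρ1, one_mul]
      _ ≤ ε + δ' := by linarith
  have hlδ' : l * δ' ≤ δ := by
    rw [hδ'def, mul_div_assoc', div_le_iff₀ hl1]
    nlinarith
  have : l * ∑ i, ρ i * ∑ j, ∑ k, γ i j k * c j k ≤ l * (ε + δ') :=
    mul_le_mul_of_nonneg_left step3 hl
  calc ∑ i, ρ i * ∑ j, π' i j * Adv i j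
      ≤ (∑ i, ρ i * ∑ j, π i j * (⨆ k : Fin N, (Adv i k - l * c j k)))
        + l * ∑ i, ρ i * ∑ j, ∑ k, γ i j k * c j k := by rw [← step2]; exact step1
    _ ≤ (∑ i, ρ i * ∑ j, π i j * (⨆ k : Fin N, (Adv i k - l * c j k))) + l * (ε + δ') := by
        linarith
    _ ≤ l * ε + (∑ i, ρ i * ∑ j, π i j * (⨆ k : Fin N, (Adv i k - l * c j k))) + δ := by
        have : l * (ε + δ') = l * ε + l * δ' := by ring
        linarith
    _ = l * ε + (∑ i, ρ i * ∑ j, π i j * (⨆ k : Fin N, (Adv i k - l * c j k))) + δ := rfl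
end

section
/- Existence of an optimal dual multiplier: Let X be a compact metric space, c : X × X → [0,∞) continuous with zero diagonal, A : X → ℝ continuous, μ a Borel probability measure on X, and ε > 0. Define h(λ) := λε + ∫_X max_{a'}(A(a') - λ c(a,a')) dμ(a). Then h is convex, lower semicontinuous, coercive (h(λ) → ∞ as λ → ∞), and attains its minimum at some λ* ∈ [0,∞). -/
open MeasureTheory Filter

/-- The dual objective `h(λ) = λ ε + ∫ Φ_λ(a) dμ(a)`. -/
noncomputable def dualObj {X : Type*} [MeasurableSpace X]
    (c : X × X → ℝ) (A : X → ℝ) (μ : Measure X) (ε : ℝ) (l : ℝ) : ℝ :=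
  l * ε + ∫ a, (⨆ a' : X, (A a' - l * c (a, a'))) ∂μ

theorem stmt6 {X : Type*} [MetricSpace X] [CompactSpace X] [Nonempty X]
    [MeasurableSpace X] [BorelSpace X]
    (c : X × X → ℝ) (hc : Continuous c) (hcnn : ∀ p, 0 ≤ c p)
    (hc0 : ∀ x, c (x, x) = 0)
    (A : X → ℝ) (hA : Continuous A)
    (μ : Measure X) [IsProbabilityMeasure μ] (ε : ℝ) (hε : 0 < ε) :
    ConvexOn ℝ (Set.Ici 0) (dualObj c A μ ε) ∧
    LowerSemicontinuousOn (dualObj c A μ ε) (Set.Ici 0) ∧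
    Tendsto (dualObj c A μ ε) atTop atTop ∧
    ∃ l : ℝ, 0 ≤ l ∧ ∀ m : ℝ, 0 ≤ m → dualObj c A μ ε l ≤ dualObj c A μ ε m := by
  classical
  set Φ : ℝ → X → ℝ := fun l a => ⨆ a' : X, (A a' - l * c (a, a')) with hΦdef
  have hcont : ∀ (l : ℝ) (a : X), Continuous fun a' : X => A a' - l * c (a, a') := by
    intro l a
    exact hA.sub (continuous_const.mul (hc.comp (Continuous.prodMk_right a)))
  have hbdd : ∀ (l : ℝ) (a : X), BddAbove (Set.range fun a' : X => A a' - l * c (a, a')) :=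
    fun l a => (isCompact_range (hcont l a)).bddAbove
  obtain ⟨MA, hMA⟩ : ∃ M, ∀ x, |A x| ≤ M := by
    obtain ⟨M, hM⟩ := isCompact_univ.exists_bound_of_continuousOn hA.continuousOn
    exact ⟨M, fun x => by simpa using hM x trivial⟩
  obtain ⟨C, hC0, hCb⟩ : ∃ C, 0 ≤ C ∧ ∀ p, c p ≤ C := by
    obtain ⟨M, hM⟩ := isCompact_univ.exists_bound_of_continuousOn hc.continuousOn
    refine ⟨M, le_trans (hcnn (Classical.arbitrary _)) ?_, fun p => ?_⟩
    · exact (abs_le.1 (by simpa using hM (Classical.arbitrary _) trivial)).2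
    · exact (abs_le.1 (by simpa using hM p trivial)).2
  have hlow : ∀ (l : ℝ) (a : X), A a ≤ Φ l a := by
    intro l a
    have := le_ciSup (hbdd l a) a
    simpa [hc0 a] using this
  have hupper : ∀ (l : ℝ) (a : X), Φ l a ≤ MA + |l| * C := by
    intro l a
    refine ciSup_le fun a' => ?_
    have h1 : A a' ≤ MA := (abs_le.1 (hMA a')).2
    have h2 : -l * c (a, a') ≤ |l| * C :=
      le_trans (mul_le_mul_of_nonneg_right (neg_le_abs l) (hcnn _))
        (mul_le_mul_of_nonneg_left (hCb _) (abs_nonneg l))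
    nlinarith
  have habs : ∀ (l : ℝ) (a : X), |Φ l a| ≤ MA + |l| * C := by
    intro l a
    refine abs_le.2 ⟨?_, hupper l a⟩
    have h1 : -MA ≤ A a := (abs_le.1 (hMA a)).1
    have := hlow l a
    nlinarith [abs_nonneg l]
  have hlsc : ∀ l : ℝ, LowerSemicontinuous (Φ l) := by
    intro l
    exact lowerSemicontinuous_ciSup (fun a => hbdd l a)
      (fun a' => (continuous_const.sub (continuous_const.mul
        (hc.comp (continuous_id.prodMk continuous_const)))).lowerSemicontinuous)
  have hint : ∀ l : ℝ, Integrable (Φ l) μ := by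
    intro l
    exact Integrable.mono' (integrable_const (MA + |l| * C))
      (hlsc l).measurable.aestronglyMeasurable
      (ae_of_all _ fun a => by simpa [Real.norm_eq_abs] using habs l a)
  have hdo : ∀ l : ℝ, dualObj c A μ ε l = l * ε + ∫ a, Φ l a ∂μ := fun l => rfl
  -- shift bound
  have hshift : ∀ (l m : ℝ) (a : X), Φ l a ≤ Φ m a + |l - m| * C := by
    intro l m a
    refine ciSup_le fun a' => ?_
    have h1 : A a' - m * c (a, a') ≤ Φ m a := le_ciSup (hbdd m a) a'
    have h2 : (m - l) * c (a, a') ≤ |l - m| * C := by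
      have : (m - l) ≤ |l - m| := by rw [abs_sub_comm]; exact le_abs_self _
      exact le_trans (mul_le_mul_of_nonneg_right this (hcnn _))
        (mul_le_mul_of_nonneg_left (hCb _) (abs_nonneg _))
    nlinarith
  have hIdiff : ∀ l m : ℝ, (∫ a, Φ l a ∂μ) ≤ (∫ a, Φ m a ∂μ) + |l - m| * C := by
    intro l m
    have := integral_mono (hint l) ((hint m).add (integrable_const (|l - m| * C)))
      (fun a => hshift l m a)
    simpa [integral_add (hint m) (integrable_const _), measure_univ] using this
  -- continuity
  have hcontH : Continuous (dualObj c A μ ε) := by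
    have hlip : ∀ l m : ℝ, |dualObj c A μ ε l - dualObj c A μ ε m| ≤ (|ε| + C) * |l - m| := by
      intro l m
      rw [hdo, hdo]
      have h1 := hIdiff l m
      have h2 := hIdiff m l
      rw [abs_sub_comm m l] at h2
      have h3 : |l * ε - m * ε| ≤ |l - m| * |ε| := by
        rw [← sub_mul, abs_mul]
      have h4 : |(∫ a, Φ l a ∂μ) - ∫ a, Φ m a ∂μ| ≤ |l - m| * C := abs_le.2 ⟨by linarith, by linarith⟩
      calc |l * ε + (∫ a, Φ l a ∂μ) - (m * ε + ∫ a, Φ m a ∂μ)|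
          ≤ |l * ε - m * ε| + |(∫ a, Φ l a ∂μ) - ∫ a, Φ m a ∂μ| := by
            rw [show l * ε + (∫ a, Φ l a ∂μ) - (m * ε + ∫ a, Φ m a ∂μ)
              = (l * ε - m * ε) + ((∫ a, Φ l a ∂μ) - ∫ a, Φ m a ∂μ) by ring]
            exact abs_add_le _ _
        _ ≤ |l - m| * |ε| + |l - m| * C := add_le_add h3 h4
        _ = (|ε| + C) * |l - m| := by ring
    have : LipschitzWith (Real.toNNReal (|ε| + C)) (dualObj c A μ ε) := by
      refine LipschitzWith.of_dist_le_mul fun l m => ?_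
      rw [Real.dist_eq, Real.dist_eq, Real.coe_toNNReal _ (by positivity)]
      exact hlip l m
    exact this.continuous
  refine ⟨?_, hcontH.lowerSemicontinuous.lowerSemicontinuousOn _, ?_, ?_⟩
  · -- convexity
    refine ⟨convex_Ici 0, ?_⟩
    intro l _ m _ t s ht hs hts
    simp only [smul_eq_mul]
    rw [hdo, hdo, hdo]
    have hpt : ∀ a : X, Φ (t * l + s * m) a ≤ t * Φ l a + s * Φ m a := by
      intro a
      refine ciSup_le fun a' => ?_
      have h1 : A a' - l * c (a, a') ≤ Φ l a := le_ciSup (hbdd l a) a'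
      have h2 : A a' - m * c (a, a') ≤ Φ m a := le_ciSup (hbdd m a) a'
      have e : A a' - (t * l + s * m) * c (a, a')
          = t * (A a' - l * c (a, a')) + s * (A a' - m * c (a, a')) := by
        linear_combination (-A a') * hts
      rw [e]
      exact add_le_add (mul_le_mul_of_nonneg_left h1 ht) (mul_le_mul_of_nonneg_left h2 hs)
    have hI : (∫ a, Φ (t * l + s * m) a ∂μ) ≤ t * (∫ a, Φ l a ∂μ) + s * (∫ a, Φ m a ∂μ) := by
      have h := integral_mono (hint _) (((hint l).const_mul t).add ((hint m).const_mul s)) hpt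
      simp only [Pi.add_apply] at h
      rwa [integral_add ((hint l).const_mul t) ((hint m).const_mul s),
        integral_const_mul, integral_const_mul] at h
    have : (t * l + s * m) * ε = t * (l * ε) + s * (m * ε) := by ring
    linarith
  · -- coercivity
    have hAint : Integrable A μ :=
      Integrable.mono' (integrable_const MA) hA.measurable.aestronglyMeasurable
        (ae_of_all _ fun a => by simpa [Real.norm_eq_abs] using hMA a)
    have hlb : ∀ l : ℝ, l * ε + ∫ a, A a ∂μ ≤ dualObj c A μ ε l := by
      intro l
      rw [hdo]
      have := integral_mono hAint (hint l) (hlow l)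
      linarith
    have htend : Tendsto (fun l : ℝ => l * ε + ∫ a, A a ∂μ) atTop atTop :=
      tendsto_atTop_add_const_right _ _ (tendsto_id.atTop_mul_const hε)
    exact tendsto_atTop_mono hlb htend
  · -- minimizer
    have hAint : Integrable A μ :=
      Integrable.mono' (integrable_const MA) hA.measurable.aestronglyMeasurable
        (ae_of_all _ fun a => by simpa [Real.norm_eq_abs] using hMA a)
    have hlb : ∀ l : ℝ, l * ε + ∫ a, A a ∂μ ≤ dualObj c A μ ε l := by
      intro l
      rw [hdo]
      have := integral_mono hAint (hint l) (hlow l)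
      linarith
    set K := ∫ a, A a ∂μ with hK
    set R : ℝ := max 0 ((dualObj c A μ ε 0 - K) / ε) with hR
    have hR0 : (0 : ℝ) ≤ R := le_max_left _ _
    obtain ⟨l₀, hl₀mem, hl₀min⟩ :=
      isCompact_Icc.exists_isMinOn (Set.nonempty_Icc.2 hR0) hcontH.continuousOn
    refine ⟨l₀, hl₀mem.1, fun m hm => ?_⟩
    by_cases hmR : m ≤ R
    · exact hl₀min ⟨hm, hmR⟩
    · push_neg at hmR
      have h1 : dualObj c A μ ε l₀ ≤ dualObj c A μ ε 0 := hl₀min ⟨le_refl 0, hR0⟩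
      have h2 : dualObj c A μ ε 0 ≤ m * ε + K := by
        have hRle : (dualObj c A μ ε 0 - K) / ε ≤ R := le_max_right _ _
        have : dualObj c A μ ε 0 - K ≤ R * ε := by
          rw [div_le_iff₀ hε] at hRle; linarith
        nlinarith
      exact le_trans h1 (le_trans h2 (hlb m))
end

section
/- Performance improvement in the exact-advantage finite case: Let S, A be finite, π a policy, π̃* an optimal solution of the trust-region problem max {Σ_s ρ_π(s) Σ_a Adv^π(s,a) π̃(a|s) : Σ_s ρ_π(s) C(π(·|s), π̃(·|s)) ≤ ε} and λ* ≥ 0 an optimal dual multiplier with zero duality gap. Then Σ_s Σ_a Adv^π(s,a) π̃*(a|s) μ(s) ≥ λ* · Σ_s C(π(·|s), π̃*(·|s)) μ(s) for any probability vector μ on S such that π̃* has the interpolated-pushforward form of the optimal update; in particular, with the true advantage function, J(π̃*) ≥ J(π) + (λ*/(1-γ)) Σ_s C(π(·|s), π̃*(·|s)) ρ_{π̃*}(s). -/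
theorem stmt16 {M N : ℕ} [NeZero N]
    (Adv : Fin M → Fin N → ℝ)
    (c : Fin N → Fin N → ℝ) (hc : ∀ j k, 0 ≤ c j k) (hc0 : ∀ j, c j j = 0)
    (π π' : Fin M → Fin N → ℝ)
    (hπ : ∀ i j, 0 ≤ π i j) (hπ1 : ∀ i, ∑ j, π i j = 1)
    -- the true advantage has zero expectation under the current policy
    (hAdv0 : ∀ i, ∑ j, Adv i j * π i j = 0)
    (l : ℝ) (hl : 0 ≤ l)
    (t : ℝ) (ht : t ∈ Set.Icc (0:ℝ) 1)
    (Tlo Thi : Fin M → Fin N → Fin N)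
    -- `Tlo` and `Thi` select maximizers of the regularized advantage
    (hTlo : ∀ i a k, Adv i k - l * c a k ≤ Adv i (Tlo i a) - l * c a (Tlo i a))
    (hThi : ∀ i a k, Adv i k - l * c a k ≤ Adv i (Thi i a) - l * c a (Thi i a))
    -- `π'` is the interpolated pushforward policy update
    (hform : ∀ i k, π' i k =
      t * (∑ a, if Tlo i a = k then π i a else 0)
        + (1 - t) * (∑ a, if Thi i a = k then π i a else 0)) :
    (∀ μ : Fin M → ℝ, (∀ i, 0 ≤ μ i) → (∑ i, μ i) = 1 →
        l * ∑ i, μ i * dOT c (π i) (π' i) ≤ ∑ i, μ i * ∑ k, Adv i k * π' i k) ∧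
    (∀ (γ Jπ Jπ' : ℝ) (ρ' : Fin M → ℝ), γ ∈ Set.Ico (0:ℝ) 1 →
        (∀ i, 0 ≤ ρ' i) → (∑ i, ρ' i) = 1 →
        -- performance difference lemma for `π'`
        Jπ' - Jπ = (1 / (1 - γ)) * ∑ i, ρ' i * ∑ k, Adv i k * π' i k →
        Jπ + (l / (1 - γ)) * ∑ i, ρ' i * dOT c (π i) (π' i) ≤ Jπ') := by
  obtain ⟨ht0, ht1⟩ := ht
  -- Key pointwise bound
  have key : ∀ i, l * dOT c (π i) (π' i) ≤ ∑ k, Adv i k * π' i k := by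
    intro i
    set cost := ∑ a, π i a * (t * c a (Tlo i a) + (1 - t) * c a (Thi i a)) with hcost
    have hcoup : dOT c (π i) (π' i) ≤ cost := by
      apply csInf_le
      · refine ⟨0, ?_⟩
        rintro r ⟨g, hg0, -, -, rfl⟩
        exact Finset.sum_nonneg fun j _ => Finset.sum_nonneg fun k _ =>
          mul_nonneg (hg0 j k) (hc j k)
      · refine ⟨fun j k => π i j * (t * (if Tlo i j = k then 1 else 0)
          + (1 - t) * (if Thi i j = k then 1 else 0)), ?_, ?_, ?_, ?_⟩
        · intro j k
          apply mul_nonneg (hπ i j)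
          apply add_nonneg <;> apply mul_nonneg <;> first
            | linarith
            | (split <;> norm_num)
        · intro j
          rw [← Finset.mul_sum]
          simp [Finset.sum_add_distrib, ← Finset.mul_sum, Finset.sum_ite_eq]
        · intro k
          rw [hform i k, Finset.mul_sum, Finset.mul_sum, ← Finset.sum_add_distrib]
          refine Finset.sum_congr rfl fun j _ => ?_
          by_cases h1 : Tlo i j = k <;> by_cases h2 : Thi i j = k <;>
            simp [h1, h2] <;> ring
        · refine Finset.sum_congr rfl fun j _ => ?_
          have hpt : ∀ k, (π i j * (t * (if Tlo i j = k then 1 else 0)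
              + (1 - t) * (if Thi i j = k then 1 else 0))) * c j k
            = (if Tlo i j = k then t * π i j * c j k else 0)
              + (if Thi i j = k then (1 - t) * π i j * c j k else 0) := by
            intro k
            split_ifs <;> ring
          rw [Finset.sum_congr rfl fun k _ => hpt k, Finset.sum_add_distrib,
            Finset.sum_ite_eq, Finset.sum_ite_eq]
          simp only [Finset.mem_univ, if_true]
          ring
    have hAdvsum : ∑ k, Adv i k * π' i k
        = ∑ a, π i a * (t * Adv i (Tlo i a) + (1 - t) * Adv i (Thi i a)) := by
      have : ∀ k, Adv i k * π' i k =
          ∑ a, ((if Tlo i a = k then t * π i a * Adv i k else 0)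
            + (if Thi i a = k then (1 - t) * π i a * Adv i k else 0)) := by
        intro k
        rw [hform i k]
        rw [Finset.sum_add_distrib]
        simp only [mul_add, Finset.mul_sum, mul_ite, mul_zero]
        congr 1 <;> refine Finset.sum_congr rfl fun a _ => ?_ <;>
          by_cases h : Tlo i a = k <;> by_cases h' : Thi i a = k <;> simp [h, h'] <;> ring
      rw [Finset.sum_congr rfl fun k _ => this k, Finset.sum_comm]
      refine Finset.sum_congr rfl fun a _ => ?_
      rw [Finset.sum_add_distrib]
      simp [Finset.sum_ite_eq']
      ring
    have hlow : ∀ a, π i a * Adv i a ≤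
        π i a * (t * (Adv i (Tlo i a) - l * c a (Tlo i a))
          + (1 - t) * (Adv i (Thi i a) - l * c a (Thi i a))) := by
      intro a
      have h1 := hTlo i a a
      have h2 := hThi i a a
      rw [hc0 a, mul_zero, sub_zero] at h1 h2
      have hmid : Adv i a ≤ t * (Adv i (Tlo i a) - l * c a (Tlo i a))
          + (1 - t) * (Adv i (Thi i a) - l * c a (Thi i a)) := by nlinarith
      exact mul_le_mul_of_nonneg_left hmid (hπ i a)
    have hsum0 : ∑ a, π i a * Adv i a = 0 := by
      rw [← hAdv0 i]
      exact Finset.sum_congr rfl fun a _ => mul_comm _ _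
    have h5 : ∑ a, π i a * (t * (Adv i (Tlo i a) - l * c a (Tlo i a))
          + (1 - t) * (Adv i (Thi i a) - l * c a (Thi i a)))
        = (∑ k, Adv i k * π' i k) - l * cost := by
      rw [hAdvsum, hcost, Finset.mul_sum, ← Finset.sum_sub_distrib]
      exact Finset.sum_congr rfl fun a _ => by ring
    have h3 : (0:ℝ) ≤ (∑ k, Adv i k * π' i k) - l * cost := by
      rw [← h5, ← hsum0]
      exact Finset.sum_le_sum fun a _ => hlow a
    have h4 : l * dOT c (π i) (π' i) ≤ l * cost := mul_le_mul_of_nonneg_left hcoup hl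
    linarith
  have part1 : ∀ μ : Fin M → ℝ, (∀ i, 0 ≤ μ i) → (∑ i, μ i) = 1 →
      l * ∑ i, μ i * dOT c (π i) (π' i) ≤ ∑ i, μ i * ∑ k, Adv i k * π' i k := by
    intro μ hμ0 _
    rw [Finset.mul_sum]
    refine Finset.sum_le_sum fun i _ => ?_
    calc l * (μ i * dOT c (π i) (π' i)) = μ i * (l * dOT c (π i) (π' i)) := by ring
      _ ≤ μ i * ∑ k, Adv i k * π' i k := mul_le_mul_of_nonneg_left (key i) (hμ0 i)
  refine ⟨part1, ?_⟩
  intro γ Jπ Jπ' ρ' hγ hρ0 hρ1 hpdl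
  have hγpos : (0:ℝ) < 1 - γ := by linarith [hγ.2]
  have h := part1 ρ' hρ0 hρ1
  have hpos : (0:ℝ) ≤ 1 / (1 - γ) := by positivity
  have h2 := mul_le_mul_of_nonneg_left h hpos
  have h3 : (l / (1 - γ)) * ∑ i, ρ' i * dOT c (π i) (π' i)
      = 1 / (1 - γ) * (l * ∑ i, ρ' i * dOT c (π i) (π' i)) := by ring
  linarith
end
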